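/- Let (X,d,μ) be a space of homogeneous type with upper dimension ω, let δ ∈ (0,1) with δ ≤ (2A₀)^{-10} be fixed, let s ∈ (0,∞), p ∈ (ω/(ω+s), ω/s), and p* := ωp/(ω−sp). Assume A₀·δ^{p/ω} < 1 and that μ has a weak lower bound ω, i.e., there exist C > 0 and x₀ ∈ X with μ(B(x₀,r)) ≥ C·r^ω for all r ≥ 1. Then there exists a constant C̃ > 0 such that: for every measurable u : X → ℝ with ‖u‖_{Ṁ^{s,p}(X)} := inf_{g∈𝒟^s(u)} ‖g‖_{L^p(μ)} < ∞, there exists a constant C' ∈ ℝ such that u − C' ∈ L^{p*}(X) and ‖u − C'‖_{L^{p*}(μ)} ≤ C̃·‖u‖_{Ṁ^{s,p}(X)}. -/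

import Mathlib

/-!
Doubling and the weak lower bound at `x₀` give `μ (B(x, ρ)) ≥ b ρ ^ ω` for every ball, so by
Chebyshev every ball `B(x, ρ)` contains, off any null set, a point where
`g ≤ (2 / b) ^ (1 / p) ‖g‖_p ρ ^ (-ω / p)`. Along such points chosen in `B(x, 2 ^ j r)` the
gradient inequality makes `u` a geometrically Cauchy sequence (because `s < ω / p`), whose limit
`c` does not depend on `x` or `r`. This gives `|u x - c| ≤ r ^ s g x + K ‖g‖_p r ^ (s - ω / p)` for
every `r > 0`, and optimising in `r` gives `|u - c| ≤ 2 (K ‖g‖_p) ^ σ g ^ (1 - σ)` with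
`σ = s p / ω`; its `p*`-th power is integrable because `(1 - σ) p* = p`. As `μ X = ∞`, `c` is the
only constant with `u - c ∈ L^{p*}`, so it is the same for every gradient `g` and the bound passes
to the infimum defining `‖u‖_{Ṁ^{s,p}}`.
-/

open MeasureTheory ENNReal Filter Topology

noncomputable section

namespace SHT

variable {X : Type*}

def ball (d : X → X → ℝ) (x : X) (r : ℝ) : Set X := {y | d x y < r}

/-- `(X, d, μ)` is a space of homogeneous type with quasi-triangle constant `A₀`
and doubling constant `Cμ`. -/
structure IsSHT [MeasurableSpace X] (d : X → X → ℝ) (μ : Measure X) (A₀ Cμ : ℝ) : Prop where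
  one_le_A : 1 ≤ A₀
  nonneg : ∀ x y, 0 ≤ d x y
  eq_zero_iff : ∀ x y, d x y = 0 ↔ x = y
  symm : ∀ x y, d x y = d y x
  triangle : ∀ x y z, d x z ≤ A₀ * (d x y + d y z)
  measurable_ball : ∀ x r, MeasurableSet (ball d x r)
  one_le_C : 1 ≤ Cμ
  ball_pos : ∀ x, ∀ r : ℝ, 0 < r → 0 < μ (ball d x r)
  ball_lt_top : ∀ x, ∀ r : ℝ, 0 < r → μ (ball d x r) < ⊤
  doubling : ∀ x, ∀ r : ℝ, 0 < r →
    μ (ball d x (2 * r)) ≤ ENNReal.ofReal Cμ * μ (ball d x r)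

/-- `g` is an `s`-gradient of `u`. -/
def IsGradient [MeasurableSpace X] (d : X → X → ℝ) (μ : Measure X) (s : ℝ)
    (u g : X → ℝ) : Prop :=
  (∀ x, 0 ≤ g x) ∧ Measurable g ∧
    ∃ E : Set X, μ E = 0 ∧ ∀ x ∉ E, ∀ y ∉ E,
      |u x - u y| ≤ d x y ^ s * (g x + g y)

/-- The homogeneous Hajłasz–Sobolev quasi-norm `‖u‖_{Ṁ^{s,p}(X)}`. -/
def hajlaszSobolevNorm [MeasurableSpace X] (d : X → X → ℝ) (μ : Measure X)
    (s p : ℝ) (u : X → ℝ) : ℝ≥0∞ :=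
  ⨅ (g : X → ℝ) (_ : IsGradient d μ s u g),
    (∫⁻ x, ENNReal.ofReal (g x) ^ p ∂μ) ^ (1 / p)

section Doubling

variable [MeasurableSpace X] {d : X → X → ℝ} {μ : Measure X} {A₀ Cμ ω : ℝ}

theorem IsSHT.measure_ball_two_pow_mul_le (hS : IsSHT d μ A₀ Cμ) (x : X) {r : ℝ} (hr : 0 < r)
    (n : ℕ) : μ (ball d x (2 ^ n * r)) ≤ ENNReal.ofReal Cμ ^ n * μ (ball d x r) := by
  induction n with
  | zero => simp
  | succ n ih =>
    calc μ (ball d x (2 ^ (n + 1) * r)) = μ (ball d x (2 * (2 ^ n * r))) := by ring_nf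
      _ ≤ ENNReal.ofReal Cμ * μ (ball d x (2 ^ n * r)) := hS.doubling x _ (by positivity)
      _ ≤ ENNReal.ofReal Cμ * (ENNReal.ofReal Cμ ^ n * μ (ball d x r)) := by gcongr
      _ = ENNReal.ofReal Cμ ^ (n + 1) * μ (ball d x r) := by ring

theorem IsSHT.measure_ball_le_rpow_mul (hS : IsSHT d μ A₀ Cμ) (hω : ω = Real.logb 2 Cμ)
    (x : X) {ρ R : ℝ} (hρ : 0 < ρ) (hρR : ρ ≤ R) :
    μ (ball d x R) ≤ ENNReal.ofReal (Cμ * (R / ρ) ^ ω) * μ (ball d x ρ) := by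
  have hC : 0 < Cμ := zero_lt_one.trans_le hS.one_le_C
  have hR : 0 < R := hρ.trans_le hρR
  obtain ⟨n, hn, hn'⟩ := exists_nat_pow_near ((one_le_div hρ).2 hρR) one_lt_two
  have hpow : Cμ ^ (n + 1) ≤ Cμ * (R / ρ) ^ ω := by
    have h2ω : (2 : ℝ) ^ ω = Cμ := by rw [hω, Real.rpow_logb two_pos (by norm_num) hC]
    calc Cμ ^ (n + 1) = ((2 : ℝ) ^ (n + 1)) ^ ω := by
          rw [← h2ω, ← Real.rpow_natCast, ← Real.rpow_mul zero_le_two, ← Real.rpow_natCast,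
            ← Real.rpow_mul zero_le_two, mul_comm]
      _ ≤ (2 * (R / ρ)) ^ ω := by
          gcongr
          · exact hω ▸ Real.logb_nonneg one_lt_two hS.one_le_C
          · rw [pow_succ']; linarith
      _ = Cμ * (R / ρ) ^ ω := by rw [Real.mul_rpow zero_le_two (by positivity), h2ω]
  calc μ (ball d x R) ≤ μ (ball d x (2 ^ (n + 1) * ρ)) := by
        refine measure_mono fun y (hy : d x y < R) => show d x y < _ from ?_
        rw [div_lt_iff₀ hρ] at hn'
        linarith
    _ ≤ ENNReal.ofReal Cμ ^ (n + 1) * μ (ball d x ρ) := hS.measure_ball_two_pow_mul_le x hρ _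
    _ ≤ ENNReal.ofReal (Cμ * (R / ρ) ^ ω) * μ (ball d x ρ) := by
        rw [← ENNReal.ofReal_pow hC.le]
        gcongr

theorem IsSHT.exists_ofReal_rpow_le_measure_ball (hS : IsSHT d μ A₀ Cμ)
    (hω : ω = Real.logb 2 Cμ) {C : ℝ} (hC : 0 < C) {x₀ : X}
    (hlow : ∀ r : ℝ, 1 ≤ r → ENNReal.ofReal (C * r ^ ω) ≤ μ (ball d x₀ r)) :
    ∃ b : ℝ, 0 < b ∧ ∀ x, ∀ ρ : ℝ, 0 < ρ → ENNReal.ofReal (b * ρ ^ ω) ≤ μ (ball d x ρ) := by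
  have hA : 0 < A₀ := zero_lt_one.trans_le hS.one_le_A
  have hCμ : 0 < Cμ := zero_lt_one.trans_le hS.one_le_C
  refine ⟨C / (Cμ * (2 * A₀) ^ ω), by positivity, fun x ρ hρ => ?_⟩
  set R := max (max 1 ρ) (d x x₀)
  have hR1 : 1 ≤ R := (le_max_left _ _).trans (le_max_left _ _)
  have hρR : ρ ≤ R := (le_max_right _ _).trans (le_max_left _ _)
  have hxR : d x x₀ ≤ R := le_max_right _ _
  have hR : 0 < R := zero_lt_one.trans_le hR1
  have hsub : ball d x₀ R ⊆ ball d x (2 * A₀ * R) := fun z (hz : d x₀ z < R) => by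
    show d x z < 2 * A₀ * R
    nlinarith [hS.triangle x x₀ z]
  have hK : ENNReal.ofReal (Cμ * (2 * A₀ * R / ρ) ^ ω) ≠ 0 := by
    rw [ne_eq, ENNReal.ofReal_eq_zero, not_le]; positivity
  have hsplit : C * R ^ ω = C / (Cμ * (2 * A₀) ^ ω) * ρ ^ ω * (Cμ * (2 * A₀ * R / ρ) ^ ω) := by
    rw [Real.div_rpow (by positivity) hρ.le, Real.mul_rpow (by positivity) hR.le]
    field_simp
  refine (ENNReal.mul_le_mul_iff_left hK ENNReal.ofReal_ne_top).mp ?_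
  calc ENNReal.ofReal (C / (Cμ * (2 * A₀) ^ ω) * ρ ^ ω) * ENNReal.ofReal (Cμ * (2 * A₀ * R / ρ) ^ ω)
      = ENNReal.ofReal (C * R ^ ω) := by rw [← ENNReal.ofReal_mul (by positivity), ← hsplit]
    _ ≤ μ (ball d x₀ R) := hlow R hR1
    _ ≤ μ (ball d x (2 * A₀ * R)) := measure_mono hsub
    _ ≤ ENNReal.ofReal (Cμ * (2 * A₀ * R / ρ) ^ ω) * μ (ball d x ρ) :=
        hS.measure_ball_le_rpow_mul hω x hρ (by nlinarith [hS.one_le_A])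
    _ = μ (ball d x ρ) * ENNReal.ofReal (Cμ * (2 * A₀ * R / ρ) ^ ω) := mul_comm _ _

end Doubling

section GoodPoints

variable [MeasurableSpace X] {d : X → X → ℝ} {μ : Measure X} {A₀ Cμ ω b p : ℝ} {g : X → ℝ}

theorem IsSHT.exists_notMem_le_rpow_neg (hS : IsSHT d μ A₀ Cμ) (hp : 0 < p) (hb : 0 < b)
    (hball : ∀ x, ∀ ρ : ℝ, 0 < ρ → ENNReal.ofReal (b * ρ ^ ω) ≤ μ (ball d x ρ))
    (hgm : Measurable g) (hg0 : ∀ x, 0 ≤ g x) (hI : ∫⁻ x, ENNReal.ofReal (g x) ^ p ∂μ ≠ ⊤)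
    {E : Set X} (hE : μ E = 0) (x : X) {ρ : ℝ} (hρ : 0 < ρ) :
    ∃ y ∉ E, d x y < ρ ∧ g y ≤ (2 / b) ^ (1 / p) *
      (∫⁻ x, ENNReal.ofReal (g x) ^ p ∂μ).toReal ^ (1 / p) * ρ ^ (-(ω / p)) := by
  set I := ∫⁻ x, ENNReal.ofReal (g x) ^ p ∂μ
  have ha : ENNReal.ofReal (b * ρ ^ ω) ≠ 0 := by
    rw [ne_eq, ENNReal.ofReal_eq_zero, not_le]; positivity
  have hB := hS.ball_lt_top x ρ hρ
  -- otherwise `∫_B g ^ p > 2 I / (b ρ ^ ω) * μ B ≥ 2 I`, more than the whole integral `I`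
  obtain ⟨y, hyB, hyE, hy⟩ : ∃ y ∈ ball d x ρ, y ∉ E ∧
      ENNReal.ofReal (g y) ^ p ≤ 2 * I / ENNReal.ofReal (b * ρ ^ ω) := by
    by_contra! hbig
    have hlt := setLIntegral_strict_mono (hS.measurable_ball x ρ)
      (ha ∘ le_zero_iff.1 ∘ (hball x ρ hρ).trans_eq) (hgm.ennreal_ofReal.pow_const p)
      (by
        rw [setLIntegral_const]
        exact mul_ne_top (div_ne_top (mul_ne_top ofNat_ne_top hI) ha) hB.ne)
      ((measure_eq_zero_iff_ae_notMem.1 hE).mono fun y hy hyB => hbig y hyB hy)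
    rw [setLIntegral_const] at hlt
    have h2I : 2 * I ≤ 2 * I / ENNReal.ofReal (b * ρ ^ ω) * μ (ball d x ρ) :=
      (ENNReal.div_mul_cancel ha ofReal_ne_top).symm.le.trans (by gcongr; exact hball x ρ hρ)
    have := (h2I.trans_lt hlt).trans_le (setLIntegral_le_lintegral _ _)
    rw [two_mul] at this
    exact this.not_ge le_self_add
  refine ⟨y, hyE, hyB, ?_⟩
  have hI' : 0 ≤ I.toReal := toReal_nonneg
  rw [ENNReal.ofReal_rpow_of_nonneg (hg0 y) hp.le, ← ENNReal.ofReal_toReal hI,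
    ← ENNReal.ofReal_ofNat, ← ENNReal.ofReal_mul zero_le_two,
    ← ENNReal.ofReal_div_of_pos (by positivity), ENNReal.ofReal_le_ofReal_iff (by positivity)] at hy
  calc g y = (g y ^ p) ^ (1 / p) := by
        rw [← Real.rpow_mul (hg0 y), mul_one_div_cancel hp.ne', Real.rpow_one]
    _ ≤ (2 * I.toReal / (b * ρ ^ ω)) ^ (1 / p) :=
      Real.rpow_le_rpow (Real.rpow_nonneg (hg0 y) p) hy (by positivity)
    _ = (2 / b) ^ (1 / p) * I.toReal ^ (1 / p) * ρ ^ (-(ω / p)) := by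
      rw [show 2 * I.toReal / (b * ρ ^ ω) = 2 / b * I.toReal * (ρ ^ ω)⁻¹ by field_simp,
        Real.mul_rpow (by positivity) (by positivity), Real.mul_rpow (by positivity) hI',
        Real.inv_rpow (by positivity), ← Real.rpow_mul hρ.le, ← Real.rpow_neg hρ.le, mul_one_div]

end GoodPoints

structure IsQuasiMetric (d : X → X → ℝ) (A₀ : ℝ) : Prop where
  one_le_A : 1 ≤ A₀
  nonneg : ∀ x y, 0 ≤ d x y
  eq_zero_iff : ∀ x y, d x y = 0 ↔ x = y
  symm : ∀ x y, d x y = d y x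
  triangle : ∀ x y z, d x z ≤ A₀ * (d x y + d y z)

theorem IsSHT.isQuasiMetric [MeasurableSpace X] {d : X → X → ℝ} {μ : Measure X} {A₀ Cμ : ℝ}
    (hS : IsSHT d μ A₀ Cμ) : IsQuasiMetric d A₀ :=
  ⟨hS.one_le_A, hS.nonneg, hS.eq_zero_iff, hS.symm, hS.triangle⟩

section Chain

theorem rpow_two_pow_mul (j : ℕ) {r : ℝ} (hr : 0 ≤ r) (z : ℝ) :
    ((2 : ℝ) ^ j * r) ^ z = r ^ z * ((2 : ℝ) ^ z) ^ j := by
  rw [Real.mul_rpow (by positivity) hr, ← Real.rpow_natCast_mul zero_le_two,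
    ← Real.rpow_mul_natCast zero_le_two, mul_comm (j : ℝ), mul_comm]

variable {d : X → X → ℝ} {A₀ s α G : ℝ} {u g : X → ℝ} {E : Set X}

theorem abs_sub_le_of_le_rpow_neg (hd : ∀ x y, 0 ≤ d x y) (hg0 : ∀ x, 0 ≤ g x)
    (hgrad : ∀ x ∉ E, ∀ y ∉ E, |u x - u y| ≤ d x y ^ s * (g x + g y)) (hs : 0 < s)
    {y y' : X} (hy : y ∉ E) (hy' : y' ∉ E) {L ρ : ℝ} (hρ : 0 < ρ)
    (hyy' : d y y' ≤ L * ρ) (hgy : g y ≤ G * ρ ^ (-α)) (hgy' : g y' ≤ G * ρ ^ (-α)) :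
    |u y - u y'| ≤ 2 * L ^ s * G * ρ ^ (s - α) := by
  have hL : 0 ≤ L := nonneg_of_mul_nonneg_left ((hd y y').trans hyy') hρ
  calc |u y - u y'| ≤ d y y' ^ s * (g y + g y') := hgrad y hy y' hy'
    _ ≤ (L * ρ) ^ s * (2 * G * ρ ^ (-α)) := by
      gcongr
      · exact add_nonneg (hg0 y) (hg0 y')
      · exact hd y y'
      · linarith
    _ = 2 * L ^ s * G * ρ ^ (s - α) := by
      rw [Real.mul_rpow hL hρ.le, sub_eq_add_neg, Real.rpow_add hρ]; ring

-- `P x ρ` is a point of `B(x, ρ) \ E` where `g` is small; `u` is compared with the limit constant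
-- along the chains `j ↦ P x (2 ^ j * r)`.
variable {P : X → ℝ → X}

theorem dist_chain_succ_le (hd : IsQuasiMetric d A₀) (hg0 : ∀ x, 0 ≤ g x)
    (hgrad : ∀ x ∉ E, ∀ y ∉ E, |u x - u y| ≤ d x y ^ s * (g x + g y)) (hs : 0 < s)
    (hα : 0 ≤ α) (hG : 0 ≤ G)
    (hP : ∀ x ρ, 0 < ρ → P x ρ ∉ E ∧ d x (P x ρ) < ρ ∧ g (P x ρ) ≤ G * ρ ^ (-α))
    (x : X) {r : ℝ} (hr : 0 < r) (j : ℕ) :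
    dist (u (P x (2 ^ j * r))) (u (P x (2 ^ (j + 1) * r))) ≤
      2 * (3 * A₀) ^ s * G * r ^ (s - α) * ((2 : ℝ) ^ (s - α)) ^ j := by
  have hρ : (0 : ℝ) < 2 ^ j * r := by positivity
  have hρ' : (2 : ℝ) ^ (j + 1) * r = 2 * (2 ^ j * r) := by ring
  obtain ⟨hyE, hyd, hyg⟩ := hP x _ hρ
  obtain ⟨hy'E, hy'd, hy'g⟩ := hP x _ (hρ'.symm ▸ by positivity : (0 : ℝ) < 2 ^ (j + 1) * r)
  rw [Real.dist_eq, mul_assoc _ (r ^ (s - α)), ← rpow_two_pow_mul j hr.le]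
  refine abs_sub_le_of_le_rpow_neg hd.nonneg hg0 hgrad hs hyE hy'E hρ ?_ hyg (hy'g.trans ?_)
  · have := hd.triangle (P x (2 ^ j * r)) x (P x (2 ^ (j + 1) * r))
    rw [hd.symm _ x, hρ'] at *
    nlinarith [hd.one_le_A]
  · exact mul_le_mul_of_nonneg_left
      (Real.rpow_le_rpow_of_nonpos hρ (by rw [hρ']; linarith) (neg_nonpos.2 hα)) hG

theorem tendsto_chain_sub_chain (hd : IsQuasiMetric d A₀) (hg0 : ∀ x, 0 ≤ g x)
    (hgrad : ∀ x ∉ E, ∀ y ∉ E, |u x - u y| ≤ d x y ^ s * (g x + g y)) (hs : 0 < s)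
    (hsα : s < α) (hG : 0 ≤ G)
    (hP : ∀ x ρ, 0 < ρ → P x ρ ∉ E ∧ d x (P x ρ) < ρ ∧ g (P x ρ) ≤ G * ρ ^ (-α))
    (x x' : X) {r r' : ℝ} (hr : 0 < r) (hr' : 0 < r') :
    Tendsto (fun j : ℕ => u (P x (2 ^ j * r)) - u (P x' (2 ^ j * r'))) atTop (𝓝 0) := by
  set m := min r r'
  have hm : 0 < m := lt_min hr hr'
  set L := (A₀ * r + A₀ ^ 2 * (d x x' + r')) / m
  have hθ : (2 : ℝ) ^ (s - α) < 1 := Real.rpow_lt_one_of_one_lt_of_neg one_lt_two (by linarith)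
  have hbound : ∀ j : ℕ, ‖u (P x (2 ^ j * r)) - u (P x' (2 ^ j * r'))‖ ≤
      2 * L ^ s * G * m ^ (s - α) * ((2 : ℝ) ^ (s - α)) ^ j := by
    intro j
    have h2j : (1 : ℝ) ≤ 2 ^ j := one_le_pow₀ one_le_two
    have hρ : (0 : ℝ) < 2 ^ j * m := by positivity
    obtain ⟨hyE, hyd, hyg⟩ := hP x _ (by positivity : (0 : ℝ) < 2 ^ j * r)
    obtain ⟨hy'E, hy'd, hy'g⟩ := hP x' _ (by positivity : (0 : ℝ) < 2 ^ j * r')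
    have hanti : ∀ {ρ}, m ≤ ρ → G * ((2 : ℝ) ^ j * ρ) ^ (-α) ≤ G * ((2 : ℝ) ^ j * m) ^ (-α) :=
      fun hmρ => mul_le_mul_of_nonneg_left (Real.rpow_le_rpow_of_nonpos hρ
        (mul_le_mul_of_nonneg_left hmρ (by positivity)) (neg_nonpos.2 (hs.trans hsα).le)) hG
    rw [Real.norm_eq_abs, mul_assoc _ (m ^ (s - α)), ← rpow_two_pow_mul j hm.le]
    refine abs_sub_le_of_le_rpow_neg hd.nonneg hg0 hgrad hs hyE hy'E hρ ?_
      (hyg.trans (hanti (min_le_left _ _))) (hy'g.trans (hanti (min_le_right _ _)))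
    have h1 := hd.triangle (P x (2 ^ j * r)) x (P x' (2 ^ j * r'))
    have h2 := hd.triangle x x' (P x' (2 ^ j * r'))
    rw [hd.symm _ x] at h1
    rw [show L * (2 ^ j * m) = 2 ^ j * (A₀ * r + A₀ ^ 2 * (d x x' + r')) by
      simp only [L]; field_simp]
    have hA := hd.one_le_A
    have := hd.nonneg x x'
    nlinarith [mul_le_mul_of_nonneg_left h2 (by linarith : (0 : ℝ) ≤ A₀),
      mul_le_mul_of_nonneg_left hyd.le (by linarith : (0 : ℝ) ≤ A₀),
      mul_le_mul_of_nonneg_left hy'd.le (by positivity : (0 : ℝ) ≤ A₀ ^ 2),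
      mul_le_mul_of_nonneg_left h2j (by positivity : (0 : ℝ) ≤ A₀ ^ 2 * d x x')]
  refine squeeze_zero_norm hbound ?_
  simpa using (tendsto_pow_atTop_nhds_zero_of_lt_one (by positivity) hθ).const_mul
    (2 * L ^ s * G * m ^ (s - α))

theorem exists_abs_sub_le_rpow_add_rpow [Nonempty X] (hd : IsQuasiMetric d A₀)
    (hg0 : ∀ x, 0 ≤ g x) (hgrad : ∀ x ∉ E, ∀ y ∉ E, |u x - u y| ≤ d x y ^ s * (g x + g y))
    (hs : 0 < s) (hsα : s < α) (hG : 0 ≤ G)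
    (hgood : ∀ x, ∀ ρ : ℝ, 0 < ρ → ∃ y ∉ E, d x y < ρ ∧ g y ≤ G * ρ ^ (-α)) :
    ∃ c : ℝ, ∀ x ∉ E, ∀ r : ℝ, 0 < r →
      |u x - c| ≤ r ^ s * g x + (1 + 2 * (3 * A₀) ^ s / (1 - 2 ^ (s - α))) * G * r ^ (s - α) := by
  choose! P hP using hgood
  have hθ : (2 : ℝ) ^ (s - α) < 1 := Real.rpow_lt_one_of_one_lt_of_neg one_lt_two (by linarith)
  have hstep := dist_chain_succ_le hd hg0 hgrad hs (hs.trans hsα).le hG hP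
  obtain ⟨x₀⟩ := ‹Nonempty X›
  obtain ⟨c, hc⟩ := cauchySeq_tendsto_of_complete
    (cauchySeq_of_le_geometric _ _ hθ (hstep x₀ one_pos))
  refine ⟨c, fun x hx r hr => ?_⟩
  have hlim : Tendsto (fun j : ℕ => u (P x (2 ^ j * r))) atTop (𝓝 c) := by
    simpa using (tendsto_chain_sub_chain hd hg0 hgrad hs hsα hG hP x x₀ hr one_pos).add hc
  have hfar : |u (P x r) - c| ≤ 2 * (3 * A₀) ^ s * G * r ^ (s - α) / (1 - 2 ^ (s - α)) := by
    simpa [Real.dist_eq] using dist_le_of_le_geometric_of_tendsto₀ _ _ hθ (hstep x hr) hlim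
  obtain ⟨hyE, hyd, hyg⟩ := hP x r hr
  have hnear : |u x - u (P x r)| ≤ r ^ s * g x + G * r ^ (s - α) :=
    calc |u x - u (P x r)| ≤ d x (P x r) ^ s * (g x + g (P x r)) := hgrad x hx _ hyE
      _ ≤ r ^ s * (g x + G * r ^ (-α)) := by
        gcongr
        · exact add_nonneg (hg0 x) (hg0 _)
        · exact hd.nonneg _ _
      _ = r ^ s * g x + G * r ^ (s - α) := by
        rw [sub_eq_add_neg, Real.rpow_add hr]; ring
  calc |u x - c| ≤ |u x - u (P x r)| + |u (P x r) - c| := abs_sub_le _ _ _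
    _ ≤ _ := add_le_add hnear hfar
    _ = _ := by field_simp; ring

end Chain

theorem le_two_mul_rpow_mul_rpow_of_forall_le {t s e A v : ℝ} (hs : 0 < s) (hse : s < e)
    (hA : 0 ≤ A) (hv : 0 ≤ v) (h : ∀ r : ℝ, 0 < r → t ≤ r ^ s * v + A * r ^ (s - e)) :
    t ≤ 2 * A ^ (s / e) * v ^ (1 - s / e) := by
  have he : 0 < e := hs.trans hse
  have hσ : 0 < s / e := div_pos hs he
  have hσ1 : 0 < 1 - s / e := by rw [sub_pos, div_lt_one he]; exact hse
  -- for `a, w > 0` the radius `r = (a / w) ^ (1 / e)` balances the two terms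
  have hpos : ∀ a w : ℝ, 0 < a → 0 < w → A ≤ a → v ≤ w →
      t ≤ 2 * a ^ (s / e) * w ^ (1 - s / e) := by
    intro a w ha hw hAa hvw
    set r := (a / w) ^ (1 / e)
    have hr : 0 < r := by positivity
    have h1 : r ^ s * w = a ^ (s / e) * w ^ (1 - s / e) := by
      rw [← Real.rpow_mul (by positivity), one_div_mul_eq_div, Real.div_rpow ha.le hw.le,
        Real.rpow_sub hw, Real.rpow_one]
      ring
    have h2 : a * r ^ (s - e) = a ^ (s / e) * w ^ (1 - s / e) := by
      rw [← Real.rpow_mul (by positivity), one_div_mul_eq_div, sub_div, div_self he.ne',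
        Real.div_rpow ha.le hw.le, Real.rpow_sub ha, Real.rpow_sub hw, Real.rpow_one, Real.rpow_one,
        Real.rpow_sub hw 1 (s / e), Real.rpow_one]
      field_simp
    calc t ≤ r ^ s * v + A * r ^ (s - e) := h r hr
      _ ≤ r ^ s * w + a * r ^ (s - e) := by gcongr
      _ = 2 * a ^ (s / e) * w ^ (1 - s / e) := by rw [h1, h2]; ring
  have hcont : Continuous fun ε : ℝ => 2 * (A + ε) ^ (s / e) * (v + ε) ^ (1 - s / e) :=
    (continuous_const.mul ((continuous_const.add continuous_id).rpow_const
      fun _ => Or.inr hσ.le)).mul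
      ((continuous_const.add continuous_id).rpow_const fun _ => Or.inr hσ1.le)
  have hlim : Tendsto (fun ε : ℝ => 2 * (A + ε) ^ (s / e) * (v + ε) ^ (1 - s / e)) (𝓝[>] 0)
      (𝓝 (2 * A ^ (s / e) * v ^ (1 - s / e))) := by
    simpa using (hcont.tendsto 0).mono_left nhdsWithin_le_nhds
  refine ge_of_tendsto hlim ?_
  filter_upwards [self_mem_nhdsWithin] with ε (hε : 0 < ε)
  exact hpos _ _ (by linarith) (by linarith) (by linarith) (by linarith)

section Lebesgue

variable [MeasurableSpace X] {μ : Measure X}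

theorem measure_univ_eq_top_of_ofReal_rpow_le {S : ℝ → Set X} {C ω : ℝ} (hC : 0 < C)
    (hω : 0 < ω) (hS : ∀ r : ℝ, 1 ≤ r → ENNReal.ofReal (C * r ^ ω) ≤ μ (S r)) :
    μ Set.univ = ⊤ := by
  refine ENNReal.eq_top_of_forall_nnreal_le fun M => ?_
  obtain ⟨r, hr1, hrM⟩ := ((eventually_ge_atTop 1).and
    (((tendsto_rpow_atTop hω).const_mul_atTop hC).eventually_ge_atTop (M : ℝ))).exists
  calc (M : ℝ≥0∞) = ENNReal.ofReal M := (ENNReal.ofReal_coe_nnreal).symm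
    _ ≤ ENNReal.ofReal (C * r ^ ω) := ENNReal.ofReal_le_ofReal hrM
    _ ≤ μ (S r) := hS r hr1
    _ ≤ μ Set.univ := measure_mono (Set.subset_univ _)

theorem eq_of_lintegral_rpow_abs_sub_lt_top (hμ : μ Set.univ = ⊤) {u : X → ℝ}
    (hu : AEStronglyMeasurable u μ) {q c₁ c₂ : ℝ} (hq : 0 < q)
    (h₁ : ∫⁻ x, ENNReal.ofReal |u x - c₁| ^ q ∂μ < ⊤)
    (h₂ : ∫⁻ x, ENNReal.ofReal |u x - c₂| ^ q ∂μ < ⊤) : c₁ = c₂ := by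
  have hmemLp : ∀ c : ℝ, ∫⁻ x, ENNReal.ofReal |u x - c| ^ q ∂μ < ⊤ →
      MemLp (fun x => u x - c) (ENNReal.ofReal q) μ := fun c hc =>
    ⟨hu.sub aestronglyMeasurable_const,
      (eLpNorm_lt_top_iff_lintegral_rpow_enorm_lt_top (by simpa using hq) ofReal_ne_top).2
        (by simpa [Real.enorm_eq_ofReal_abs, ENNReal.toReal_ofReal hq.le] using hc)⟩
  have hconst : MemLp (fun _ => c₂ - c₁) (ENNReal.ofReal q) μ := by
    convert (hmemLp c₁ h₁).sub (hmemLp c₂ h₂) using 1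
    ext x; simp
  rcases (memLp_const_iff (by simpa using hq) ofReal_ne_top).1 hconst with h | h
  · linarith
  · exact absurd hμ h.ne

theorem lintegral_rpow_le_of_ae_abs_le {f g : X → ℝ} {M a p q : ℝ} (hM : 0 ≤ M)
    (hg0 : ∀ x, 0 ≤ g x) (ha : 0 ≤ a) (hq : 0 ≤ q) (hp : a * q = p)
    (h : ∀ᵐ x ∂μ, |f x| ≤ M * g x ^ a) :
    ∫⁻ x, ENNReal.ofReal |f x| ^ q ∂μ ≤
      ENNReal.ofReal M ^ q * ∫⁻ x, ENNReal.ofReal (g x) ^ p ∂μ := by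
  rw [← lintegral_const_mul' _ _ (rpow_ne_top_of_nonneg hq ofReal_ne_top)]
  refine lintegral_mono_ae (h.mono fun x hx => ?_)
  calc ENNReal.ofReal |f x| ^ q ≤ ENNReal.ofReal (M * g x ^ a) ^ q := by gcongr
    _ = ENNReal.ofReal M ^ q * ENNReal.ofReal (g x) ^ p := by
      rw [ENNReal.ofReal_mul hM, ENNReal.mul_rpow_of_nonneg _ _ hq,
        ← ENNReal.ofReal_rpow_of_nonneg (hg0 x) ha, ← ENNReal.rpow_mul, hp]

end Lebesgue

section Sobolev

variable [MeasurableSpace X] {d : X → X → ℝ} {μ : Measure X} {A₀ Cμ ω b s p q : ℝ}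

theorem IsSHT.exists_const_forall_isGradient [Nonempty X] (hS : IsSHT d μ A₀ Cμ) (hs : 0 < s)
    (hp : 0 < p) (hsω : s < ω / p) (hq : (1 - s / (ω / p)) * q = p) (hb : 0 < b)
    (hball : ∀ x, ∀ ρ : ℝ, 0 < ρ → ENNReal.ofReal (b * ρ ^ ω) ≤ μ (ball d x ρ)) :
    ∃ Ct : ℝ, 0 < Ct ∧ ∀ u g : X → ℝ, IsGradient d μ s u g →
      ∫⁻ x, ENNReal.ofReal (g x) ^ p ∂μ ≠ ⊤ → ∃ c : ℝ,
        ∫⁻ x, ENNReal.ofReal |u x - c| ^ q ∂μ < ⊤ ∧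
        (∫⁻ x, ENNReal.ofReal |u x - c| ^ q ∂μ) ^ (1 / q) ≤
          ENNReal.ofReal Ct * (∫⁻ x, ENNReal.ofReal (g x) ^ p ∂μ) ^ (1 / p) := by
  set σ := s / (ω / p)
  have hσ1 : 0 < 1 - σ := by rw [sub_pos, div_lt_one (hs.trans hsω)]; exact hsω
  have hq0 : 0 < q := pos_of_mul_pos_right (hq ▸ hp) hσ1.le
  set K := 1 + 2 * (3 * A₀) ^ s / (1 - 2 ^ (s - ω / p))
  have hK : 0 < K := by
    have : (2 : ℝ) ^ (s - ω / p) < 1 := Real.rpow_lt_one_of_one_lt_of_neg one_lt_two (by linarith)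
    have := hS.one_le_A
    positivity
  refine ⟨2 * (K * (2 / b) ^ (1 / p)) ^ σ, by positivity, ?_⟩
  rintro u g ⟨hg0, hgm, E, hE, hgrad⟩ hI
  set I := ∫⁻ x, ENNReal.ofReal (g x) ^ p ∂μ
  have hJ : 0 ≤ I.toReal := toReal_nonneg
  set G := (2 / b) ^ (1 / p) * I.toReal ^ (1 / p)
  obtain ⟨c, hc⟩ := exists_abs_sub_le_rpow_add_rpow hS.isQuasiMetric hg0 hgrad hs hsω
    (by positivity) fun x ρ hρ => hS.exists_notMem_le_rpow_neg hp hb hball hgm hg0 hI hE x hρ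
  have hpointwise : ∀ᵐ x ∂μ, |u x - c| ≤ 2 * (K * G) ^ σ * g x ^ (1 - σ) :=
    (measure_eq_zero_iff_ae_notMem.1 hE).mono fun x hx =>
      le_two_mul_rpow_mul_rpow_of_forall_le hs hsω (by positivity) (hg0 x)
        fun r hr => (hc x hx r hr).trans_eq (by ring)
  have hint := lintegral_rpow_le_of_ae_abs_le (by positivity) hg0 hσ1.le hq0.le hq hpointwise
  refine ⟨c, hint.trans_lt (mul_lt_top (rpow_lt_top_of_nonneg hq0.le ofReal_ne_top) hI.lt_top),
    ?_⟩
  have hexp : 1 / p * σ + 1 / q = 1 / p := by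
    rw [← hq]
    field_simp
    ring
  calc (∫⁻ x, ENNReal.ofReal |u x - c| ^ q ∂μ) ^ (1 / q)
      ≤ (ENNReal.ofReal (2 * (K * G) ^ σ) ^ q * I) ^ (1 / q) := by gcongr
    _ = ENNReal.ofReal (2 * (K * G) ^ σ) * I ^ (1 / q) := by
      rw [ENNReal.mul_rpow_of_nonneg _ _ (by positivity), ← ENNReal.rpow_mul,
        mul_one_div_cancel hq0.ne', ENNReal.rpow_one]
    _ = ENNReal.ofReal (2 * (K * (2 / b) ^ (1 / p)) ^ σ) * I ^ (1 / p) := by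
      rw [← ENNReal.ofReal_toReal hI, ENNReal.ofReal_rpow_of_nonneg hJ (by positivity),
        ENNReal.ofReal_rpow_of_nonneg hJ (by positivity), ← ENNReal.ofReal_mul (by positivity),
        ← ENNReal.ofReal_mul (by positivity), ← mul_assoc K, Real.mul_rpow (by positivity)
        (by positivity), ← Real.rpow_mul hJ, mul_assoc, mul_assoc,
        ← Real.rpow_add' hJ (by rw [hexp]; positivity), hexp]
      congr 1
      ring

theorem exists_lintegral_rpow_le_hajlaszSobolevNorm (hμ : μ Set.univ = ⊤) {u : X → ℝ}
    (hu : AEStronglyMeasurable u μ) (hp : 0 < p) (hq : 0 < q) {Ct : ℝ} (hCt : 0 < Ct)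
    (hnorm : hajlaszSobolevNorm d μ s p u < ⊤)
    (hgrad : ∀ g : X → ℝ, IsGradient d μ s u g →
      ∫⁻ x, ENNReal.ofReal (g x) ^ p ∂μ ≠ ⊤ → ∃ c : ℝ,
        ∫⁻ x, ENNReal.ofReal |u x - c| ^ q ∂μ < ⊤ ∧
        (∫⁻ x, ENNReal.ofReal |u x - c| ^ q ∂μ) ^ (1 / q) ≤
          ENNReal.ofReal Ct * (∫⁻ x, ENNReal.ofReal (g x) ^ p ∂μ) ^ (1 / p)) :
    ∃ c : ℝ, ∫⁻ x, ENNReal.ofReal |u x - c| ^ q ∂μ < ⊤ ∧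
      (∫⁻ x, ENNReal.ofReal |u x - c| ^ q ∂μ) ^ (1 / q) ≤
        ENNReal.ofReal Ct * hajlaszSobolevNorm d μ s p u := by
  obtain ⟨g₀, hg₀, hlt⟩ : ∃ g, IsGradient d μ s u g ∧
      (∫⁻ x, ENNReal.ofReal (g x) ^ p ∂μ) ^ (1 / p) < ⊤ := by
    simpa [hajlaszSobolevNorm, iInf_lt_iff] using hnorm
  obtain ⟨c, hc, -⟩ := hgrad g₀ hg₀ ((rpow_lt_top_iff_of_pos (by positivity)).1 hlt).ne
  refine ⟨c, hc, ?_⟩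
  have hCt0 : ENNReal.ofReal Ct ≠ 0 := by rwa [ne_eq, ENNReal.ofReal_eq_zero, not_le]
  rw [hajlaszSobolevNorm, mul_iInf_of_ne hCt0 ofReal_ne_top]
  refine le_iInf fun g => ?_
  rw [mul_iInf_of_ne hCt0 ofReal_ne_top]
  refine le_iInf fun hg => ?_
  by_cases hI : ∫⁻ x, ENNReal.ofReal (g x) ^ p ∂μ = ⊤
  · rw [hI, top_rpow_of_pos (by positivity), mul_top hCt0]
    exact le_top
  · obtain ⟨c', hc', hle⟩ := hgrad g hg hI
    rwa [eq_of_lintegral_rpow_abs_sub_lt_top hμ hu hq hc hc']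

end Sobolev

theorem sub_const_in_Lpst_general
    [MeasurableSpace X] (d : X → X → ℝ) (μ : Measure X) (A₀ Cμ : ℝ)
    (hSHT : IsSHT d μ A₀ Cμ)
    (ω : ℝ) (hω : ω = Real.logb 2 Cμ)
    (s p pst : ℝ) (hs : 0 < s) (hp0 : ω / (ω + s) < p) (hp1 : p < ω / s)
    (hpst : pst = ω * p / (ω - s * p))
    (hlow : ∃ C : ℝ, 0 < C ∧ ∃ x₀ : X, ∀ r : ℝ, 1 ≤ r →
      ENNReal.ofReal (C * r ^ ω) ≤ μ (ball d x₀ r)) :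
    ∃ Ct : ℝ, 0 < Ct ∧
      ∀ u : X → ℝ, Measurable u → hajlaszSobolevNorm d μ s p u < ⊤ →
        ∃ C' : ℝ,
          (∫⁻ x, ENNReal.ofReal |u x - C'| ^ pst ∂μ) < ⊤ ∧
          (∫⁻ x, ENNReal.ofReal |u x - C'| ^ pst ∂μ) ^ (1 / pst) ≤
            ENNReal.ofReal Ct * hajlaszSobolevNorm d μ s p u := by
  obtain ⟨C, hC, x₀, hlow⟩ := hlow
  have : Nonempty X := ⟨x₀⟩
  have hω0 : 0 < ω := by
    rcases (hω ▸ Real.logb_nonneg one_lt_two hSHT.one_le_C : 0 ≤ ω).lt_or_eq with h | rfl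
    · exact h
    · simp only [zero_div, zero_add] at hp0 hp1
      linarith
  have hp : 0 < p := (div_pos hω0 (by linarith)).trans hp0
  have hsp : 0 < ω - s * p := by rw [lt_div_iff₀ hs] at hp1; linarith
  obtain ⟨b, hb, hball⟩ := hSHT.exists_ofReal_rpow_le_measure_ball hω hC hlow
  obtain ⟨Ct, hCt, hgrad⟩ := hSHT.exists_const_forall_isGradient (q := pst) hs hp
    (by rw [lt_div_iff₀ hp]; linarith) (by rw [hpst]; field_simp) hb hball
  refine ⟨Ct, hCt, fun u hu hnorm => ?_⟩
  exact exists_lintegral_rpow_le_hajlaszSobolevNorm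
    (measure_univ_eq_top_of_ofReal_rpow_le hC hω0 hlow) hu.aestronglyMeasurable hp
    (by rw [hpst]; positivity) hCt hnorm (hgrad u)

/-- Let `s > 0`, `p ∈ (ω/(ω+s), ω/s)`, `p* = ωp/(ω-sp)`, assume
`A₀ δ^{p/ω} < 1` and that `μ` has a weak lower bound `ω`. Then there is `C̃ > 0`
such that every measurable `u` with `‖u‖_{Ṁ^{s,p}(X)} < ∞` admits a constant
`C' ∈ ℝ` with `u - C' ∈ L^{p*}(X)` and `‖u - C'‖_{L^{p*}} ≤ C̃ ‖u‖_{Ṁ^{s,p}(X)}`. -/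
theorem sub_const_in_Lpst
    [MeasurableSpace X] (d : X → X → ℝ) (μ : Measure X) (A₀ Cμ δ : ℝ)
    (hSHT : IsSHT d μ A₀ Cμ)
    (hδ0 : 0 < δ) (hδ1 : δ < 1) (hδA : δ ≤ (2 * A₀) ^ (-10 : ℤ))
    (ω : ℝ) (hω : ω = Real.logb 2 Cμ)
    (s p pst : ℝ) (hs : 0 < s) (hp0 : ω / (ω + s) < p) (hp1 : p < ω / s)
    (hpst : pst = ω * p / (ω - s * p))
    (hAδ : A₀ * δ ^ (p / ω) < 1)
    (hlow : ∃ C : ℝ, 0 < C ∧ ∃ x₀ : X, ∀ r : ℝ, 1 ≤ r →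
      ENNReal.ofReal (C * r ^ ω) ≤ μ (ball d x₀ r)) :
    ∃ Ct : ℝ, 0 < Ct ∧
      ∀ u : X → ℝ, Measurable u → hajlaszSobolevNorm d μ s p u < ⊤ →
        ∃ C' : ℝ,
          (∫⁻ x, ENNReal.ofReal |u x - C'| ^ pst ∂μ) < ⊤ ∧
          (∫⁻ x, ENNReal.ofReal |u x - C'| ^ pst ∂μ) ^ (1 / pst) ≤
            ENNReal.ofReal Ct * hajlaszSobolevNorm d μ s p u :=
  sub_const_in_Lpst_general d μ A₀ Cμ hSHT ω hω s p pst hs hp0 hp1 hpst hlow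

end SHT
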